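/- Let K be the d×d nilpotent Jordan block Σ_{i=1}^{d-1}|i−1⟩⟨i| and n ≥ 2. A permutation-symmetric state ψ of n qudits satisfies K_{(1)}ψ ∈ S (i.e. K stabilizes ψ in the single-particle sense) if and only if ψ is a linear combination ψ = Σ_{j=0}^{d−1} α_j E_j of the excitation states E_j = Σ_{i_1+⋯+i_n=j} |i_1⟩⋯|i_n⟩. -/
import Mathlib


open Matrix BigOperators Polynomial

/-- Permutation symmetry of an `n`-qudit state represented by its amplitudes. -/
def PSym {n d : ℕ} (ψ : (Fin n → Fin d) → ℂ) : Prop :=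
  ∀ σ : Equiv.Perm (Fin n), ∀ x : Fin n → Fin d, ψ (x ∘ σ) = ψ x

/-- The operator `B` acting on the `k`-th tensor factor (identity elsewhere). -/
noncomputable def appAt {n d : ℕ} (k : Fin n) (B : Matrix (Fin d) (Fin d) ℂ)
    (ψ : (Fin n → Fin d) → ℂ) : (Fin n → Fin d) → ℂ :=
  fun x => ∑ j : Fin d, B (x k) j * ψ (Function.update x k j)

/-- The operator `A 1 ⊗ A 2 ⊗ ⋯ ⊗ A n` acting on an `n`-qudit state. -/
noncomputable def appAll {n d : ℕ} (A : Fin n → Matrix (Fin d) (Fin d) ℂ)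
    (ψ : (Fin n → Fin d) → ℂ) : (Fin n → Fin d) → ℂ :=
  fun x => ∑ y : Fin n → Fin d, (∏ k, A k (x k) (y k)) * ψ y

/-- The nilpotent Jordan block `K = Σ_{i=1}^{d-1} |i-1⟩⟨i|`. -/
noncomputable def Kblock (d : ℕ) : Matrix (Fin d) (Fin d) ℂ :=
  Matrix.of fun a b => if (a : ℕ) + 1 = (b : ℕ) then 1 else 0

/-- The unnormalized excitation state `E_j = Σ_{i_1+⋯+i_n=j} |i_1⟩⋯|i_n⟩`. -/
noncomputable def Estate (n d : ℕ) (j : ℕ) : (Fin n → Fin d) → ℂ :=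
  fun x => if (∑ k, (x k : ℕ)) = j then 1 else 0

namespace Aux14

variable {n d : ℕ}

lemma appAt_K (k : Fin n) (ψ : (Fin n → Fin d) → ℂ) (x : Fin n → Fin d) :
    appAt k (Kblock d) ψ x =
      if h : (x k : ℕ) + 1 < d then ψ (Function.update x k ⟨(x k : ℕ) + 1, h⟩) else 0 := by
  unfold appAt Kblock
  split
  · next h =>
    rw [Finset.sum_eq_single (⟨(x k : ℕ) + 1, h⟩ : Fin d)]
    · simp
    · intro b _ hb
      simp only [Matrix.of_apply]
      rw [if_neg, zero_mul]
      intro hc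
      exact hb (by ext; simpa using hc.symm)
    · simp
  · next h =>
    apply Finset.sum_eq_zero
    intro b _
    simp only [Matrix.of_apply]
    rw [if_neg, zero_mul]
    intro hc
    have := b.2
    omega

lemma update_comp_swap (x : Fin n → Fin d) (z0 p : Fin n) (j : Fin d) :
    Function.update x p j ∘ (Equiv.swap z0 p) = Function.update (x ∘ (Equiv.swap z0 p)) z0 j := by
  funext k
  simp only [Function.comp_apply]
  rcases eq_or_ne k z0 with rfl | hk
  · rw [Equiv.swap_apply_left, Function.update_self, Function.update_self]
  · rw [Function.update_of_ne hk]
    have hne : Equiv.swap z0 p k ≠ p := by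
      intro h
      exact hk ((Equiv.swap z0 p).injective (h.trans (Equiv.swap_apply_left z0 p).symm))
    rw [Function.update_of_ne hne]; rfl

variable {ψ : (Fin n → Fin d) → ℂ}

lemma move (z0 : Fin n) (hψ : PSym ψ) (hK : PSym (appAt z0 (Kblock d) ψ))
    (x : Fin n → Fin d) (p q : Fin n) :
    (if h : (x p : ℕ) + 1 < d then ψ (Function.update x p ⟨(x p : ℕ) + 1, h⟩) else 0) =
    (if h : (x q : ℕ) + 1 < d then ψ (Function.update x q ⟨(x q : ℕ) + 1, h⟩) else 0) := by
  have key : ∀ r : Fin n, appAt z0 (Kblock d) ψ (x ∘ Equiv.swap z0 r) =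
      (if h : (x r : ℕ) + 1 < d then ψ (Function.update x r ⟨(x r : ℕ) + 1, h⟩) else 0) := by
    intro r
    rw [appAt_K]
    simp only [Function.comp_apply, Equiv.swap_apply_left]
    split
    · next h =>
      refine (congrArg ψ (update_comp_swap x z0 r ⟨(x r : ℕ) + 1, h⟩).symm).trans ?_
      exact hψ (Equiv.swap z0 r) _
    · rfl
  rw [← key p, ← key q, hK (Equiv.swap z0 p) x, hK (Equiv.swap z0 q) x]

lemma transfer (z0 : Fin n) (hψ : PSym ψ) (hK : PSym (appAt z0 (Kblock d) ψ))
    {x : Fin n → Fin d} {p q : Fin n} (hp : (x p : ℕ) + 1 < d) (hq : (x q : ℕ) + 1 < d) :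
    ψ (Function.update x p ⟨(x p : ℕ) + 1, hp⟩) = ψ (Function.update x q ⟨(x q : ℕ) + 1, hq⟩) := by
  have := move z0 hψ hK x p q
  rw [dif_pos hp, dif_pos hq] at this
  exact this

lemma overflow (z0 : Fin n) (hψ : PSym ψ) (hK : PSym (appAt z0 (Kblock d) ψ))
    {x : Fin n → Fin d} {p q : Fin n} (hp : ¬ ((x p : ℕ) + 1 < d)) (hq : (x q : ℕ) + 1 < d) :
    ψ (Function.update x q ⟨(x q : ℕ) + 1, hq⟩) = 0 := by
  have := move z0 hψ hK x p q
  rw [dif_neg hp, dif_pos hq] at this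
  exact this.symm


def S (x : Fin n → Fin d) : ℕ := ∑ k, (x k : ℕ)

lemma S_update (x : Fin n → Fin d) (p : Fin n) (a : Fin d) :
    S (Function.update x p a) + (x p : ℕ) = S x + (a : ℕ) := by
  unfold S
  rw [← Finset.add_sum_erase _ (fun k => ((Function.update x p a k : ℕ))) (Finset.mem_univ p),
      ← Finset.add_sum_erase _ (fun k => ((x k : ℕ))) (Finset.mem_univ p)]
  have h1 : ((Function.update x p a p : ℕ)) = (a : ℕ) := by rw [Function.update_self]
  have h2 : ∑ k ∈ Finset.univ.erase p, ((Function.update x p a k : ℕ)) =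
      ∑ k ∈ Finset.univ.erase p, ((x k : ℕ)) := by
    apply Finset.sum_congr rfl
    intro k hk
    rw [Function.update_of_ne (Finset.mem_erase.mp hk).1]
  omega

lemma sum_split_pair (f : Fin n → ℕ) {p q : Fin n} (hpq : p ≠ q) :
    ∑ k, f k = f p + f q + ∑ k ∈ (Finset.univ.erase p).erase q, f k := by
  rw [← Finset.add_sum_erase _ f (Finset.mem_univ p),
      ← Finset.add_sum_erase _ f (Finset.mem_erase.mpr ⟨hpq.symm, Finset.mem_univ q⟩)]
  ring

lemma eq_of_sum_eq (z0 : Fin n) (hψ : PSym ψ) (hK : PSym (appAt z0 (Kblock d) ψ)) :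
    ∀ (D : ℕ) (x y : Fin n → Fin d),
      (∑ k, (((x k : ℕ) - (y k : ℕ)) + ((y k : ℕ) - (x k : ℕ)))) ≤ D →
      S x = S y → ψ x = ψ y := by
  intro D
  induction D with
  | zero =>
    intro x y hD hs
    have hxy : x = y := by
      funext k
      have hk := Finset.sum_eq_zero_iff.mp (Nat.le_zero.mp hD) k (Finset.mem_univ k)
      exact Fin.ext (by omega)
    rw [hxy]
  | succ D ih =>
    intro x y hD hs
    by_cases hxy : x = y
    · rw [hxy]
    have hs' : ∑ k, (x k : ℕ) = ∑ k, (y k : ℕ) := hs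
    have hp : ∃ p, (y p : ℕ) < (x p : ℕ) := by
      by_contra h
      push_neg at h
      exact hxy (funext fun k => Fin.ext
        ((Finset.sum_eq_sum_iff_of_le (fun i _ => h i)).mp hs' k (Finset.mem_univ k)))
    have hq : ∃ q, (x q : ℕ) < (y q : ℕ) := by
      by_contra h
      push_neg at h
      exact hxy (funext fun k => Fin.ext
        ((Finset.sum_eq_sum_iff_of_le (fun i _ => h i)).mp hs'.symm k (Finset.mem_univ k)).symm)
    obtain ⟨p, hp⟩ := hp
    obtain ⟨q, hq⟩ := hq
    have hpq : p ≠ q := by intro h; subst h; omega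
    have hxpd := (x p).2
    have hyqd := (y q).2
    set b : Fin n → Fin d := Function.update x p ⟨(x p : ℕ) - 1, by omega⟩ with hb
    have hbp : (b p : ℕ) = (x p : ℕ) - 1 := by rw [hb, Function.update_self]
    have hbq : (b q : ℕ) = (x q : ℕ) := by rw [hb, Function.update_of_ne hpq.symm]
    have h1 : (b p : ℕ) + 1 < d := by omega
    have h2 : (b q : ℕ) + 1 < d := by omega
    have step := transfer z0 hψ hK (x := b) (p := p) (q := q) h1 h2
    have e1 : Function.update b p ⟨(b p : ℕ) + 1, h1⟩ = x := by
      funext k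
      rcases eq_or_ne k p with rfl | hk
      · rw [Function.update_self]
        exact Fin.ext (by simp only [Fin.val_mk]; omega)
      · rw [Function.update_of_ne hk, hb, Function.update_of_ne hk]
    set x' : Fin n → Fin d := Function.update b q ⟨(b q : ℕ) + 1, h2⟩ with hx'
    have hx'p : (x' p : ℕ) = (x p : ℕ) - 1 := by
      rw [hx', Function.update_of_ne hpq, hbp]
    have hx'q : (x' q : ℕ) = (x q : ℕ) + 1 := by
      rw [hx', Function.update_self, Fin.val_mk, hbq]
    have hSb := S_update x p (⟨(x p : ℕ) - 1, by omega⟩ : Fin d)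
    have hSx' := S_update b q (⟨(b q : ℕ) + 1, h2⟩ : Fin d)
    rw [← hb] at hSb
    rw [← hx'] at hSx'
    have hxp1 : 1 ≤ (x p : ℕ) := by omega
    have hSeq : S x' = S y := by
      simp only [Fin.val_mk] at hSb hSx'
      omega
    have hrest : ∑ k ∈ (Finset.univ.erase p).erase q,
        (((x' k : ℕ) - (y k : ℕ)) + ((y k : ℕ) - (x' k : ℕ))) =
        ∑ k ∈ (Finset.univ.erase p).erase q,
        (((x k : ℕ) - (y k : ℕ)) + ((y k : ℕ) - (x k : ℕ))) := by
      apply Finset.sum_congr rfl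
      intro k hk
      have hk2 := Finset.mem_erase.mp hk
      have hk1 := (Finset.mem_erase.mp hk2.2).1
      rw [hx', Function.update_of_ne hk2.1, hb, Function.update_of_ne hk1]
    have hDb : ∑ k, (((x' k : ℕ) - (y k : ℕ)) + ((y k : ℕ) - (x' k : ℕ))) ≤ D := by
      rw [sum_split_pair _ hpq, hrest]
      rw [sum_split_pair (fun k => (((x k : ℕ) - (y k : ℕ)) + ((y k : ℕ) - (x k : ℕ)))) hpq] at hD
      omega
    calc ψ x = ψ x' := by rw [← e1, step]
    _ = ψ y := ih x' y hDb hSeq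

lemma exists_pos (z0 : Fin n) (x : Fin n → Fin d) (hx : d ≤ S x) :
    ∃ q, q ≠ z0 ∧ 1 ≤ (x q : ℕ) := by
  by_contra h
  push_neg at h
  have hz : S x = (x z0 : ℕ) := by
    unfold S
    rw [← Finset.add_sum_erase _ (fun k => ((x k : ℕ))) (Finset.mem_univ z0)]
    have h0 : ∑ k ∈ Finset.univ.erase z0, ((x k : ℕ)) = 0 :=
      Finset.sum_eq_zero (fun k hk => by
        have := h k (Finset.mem_erase.mp hk).1; omega)
    omega
  have := (x z0).2
  omega

lemma zero_of_top (z0 : Fin n) (hψ : PSym ψ) (hK : PSym (appAt z0 (Kblock d) ψ))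
    (x : Fin n → Fin d) (h0 : ¬ ((x z0 : ℕ) + 1 < d)) {q : Fin n} (hq0 : q ≠ z0)
    (hq1 : 1 ≤ (x q : ℕ)) : ψ x = 0 := by
  have hqd := (x q).2
  set b : Fin n → Fin d := Function.update x q ⟨(x q : ℕ) - 1, by omega⟩ with hb
  have hbq : (b q : ℕ) = (x q : ℕ) - 1 := by rw [hb, Function.update_self]
  have hbz : (b z0 : ℕ) = (x z0 : ℕ) := by rw [hb, Function.update_of_ne hq0.symm]
  have h2 : (b q : ℕ) + 1 < d := by omega
  have h1 : ¬ ((b z0 : ℕ) + 1 < d) := by omega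
  have hov := overflow z0 hψ hK (p := z0) (q := q) h1 h2
  have e1 : Function.update b q ⟨(b q : ℕ) + 1, h2⟩ = x := by
    funext k
    rcases eq_or_ne k q with rfl | hk
    · rw [Function.update_self]
      exact Fin.ext (by simp only [Fin.val_mk]; omega)
    · rw [Function.update_of_ne hk, hb, Function.update_of_ne hk]
  rwa [e1] at hov

lemma zero_of_big (z0 : Fin n) (hψ : PSym ψ) (hK : PSym (appAt z0 (Kblock d) ψ)) :
    ∀ (t : ℕ) (x : Fin n → Fin d), d ≤ S x → d - 1 - (x z0 : ℕ) ≤ t → ψ x = 0 := by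
  intro t
  induction t with
  | zero =>
    intro x hx ht
    obtain ⟨q, hq0, hq1⟩ := exists_pos z0 x hx
    have := (x z0).2
    exact zero_of_top z0 hψ hK x (by omega) hq0 hq1
  | succ t ih =>
    intro x hx ht
    obtain ⟨q, hq0, hq1⟩ := exists_pos z0 x hx
    by_cases h0 : (x z0 : ℕ) + 1 < d
    · have hqd := (x q).2
      set b : Fin n → Fin d := Function.update x q ⟨(x q : ℕ) - 1, by omega⟩ with hb
      have hbq : (b q : ℕ) = (x q : ℕ) - 1 := by rw [hb, Function.update_self]
      have hbz : (b z0 : ℕ) = (x z0 : ℕ) := by rw [hb, Function.update_of_ne hq0.symm]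
      have h2 : (b q : ℕ) + 1 < d := by omega
      have h1 : (b z0 : ℕ) + 1 < d := by omega
      have step := transfer z0 hψ hK (x := b) (p := q) (q := z0) h2 h1
      have e1 : Function.update b q ⟨(b q : ℕ) + 1, h2⟩ = x := by
        funext k
        rcases eq_or_ne k q with rfl | hk
        · rw [Function.update_self]
          exact Fin.ext (by simp only [Fin.val_mk]; omega)
        · rw [Function.update_of_ne hk, hb, Function.update_of_ne hk]
      set x' : Fin n → Fin d := Function.update b z0 ⟨(b z0 : ℕ) + 1, h1⟩ with hx'
      have hx'z : (x' z0 : ℕ) = (x z0 : ℕ) + 1 := by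
        rw [hx', Function.update_self, Fin.val_mk, hbz]
      have hSb := S_update x q (⟨(x q : ℕ) - 1, by omega⟩ : Fin d)
      have hSx' := S_update b z0 (⟨(b z0 : ℕ) + 1, h1⟩ : Fin d)
      rw [← hb] at hSb
      rw [← hx'] at hSx'
      simp only [Fin.val_mk] at hSb hSx'
      have hS' : d ≤ S x' := by omega
      calc ψ x = ψ x' := by rw [← e1, step]
      _ = 0 := ih x' hS' (by omega)
    · exact zero_of_top z0 hψ hK x h0 hq0 hq1

lemma S_canon (z0 : Fin n) (j : Fin d) :
    S (Function.update (fun _ => (⟨0, j.pos⟩ : Fin d)) z0 j) = (j : ℕ) := by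
  have h := S_update (fun _ : Fin n => (⟨0, j.pos⟩ : Fin d)) z0 j
  have h0 : S (fun _ : Fin n => (⟨0, j.pos⟩ : Fin d)) = 0 := by
    unfold S; simp
  beta_reduce at h
  simp only [Fin.val_mk] at h
  omega

end Aux14


namespace Aux14
variable {n d : ℕ} {ψ : (Fin n → Fin d) → ℂ}

lemma sum_E (α : Fin d → ℂ) (x : Fin n → Fin d) :
    ∑ j : Fin d, α j * Estate n d (j : ℕ) x =
      if h : S x < d then α ⟨S x, h⟩ else 0 := by
  unfold Estate
  split
  · next h =>
    rw [Finset.sum_eq_single (⟨S x, h⟩ : Fin d)]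
    · have hc : (∑ k, ((x k : ℕ))) = ((⟨S x, h⟩ : Fin d) : ℕ) := rfl
      rw [if_pos hc, mul_one]
    · intro b _ hb
      have hc : ¬ ((∑ k, ((x k : ℕ))) = (b : ℕ)) := by
        intro hc
        exact hb (Fin.ext hc.symm)
      rw [if_neg hc, mul_zero]
    · simp
  · next h =>
    apply Finset.sum_eq_zero
    intro b _
    have hc : ¬ ((∑ k, ((x k : ℕ))) = (b : ℕ)) := by
      have := b.2
      unfold S at h
      omega
    rw [if_neg hc, mul_zero]

lemma K_formula (z0 : Fin n) (α : Fin d → ℂ)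
    (hα : ψ = fun x => ∑ j : Fin d, α j * Estate n d (j : ℕ) x) (y : Fin n → Fin d) :
    appAt z0 (Kblock d) ψ y = ∑ j : Fin d, α j * (if S y + 1 = (j : ℕ) then 1 else 0) := by
  rw [appAt_K]
  split
  · next h =>
    simp only [hα]
    apply Finset.sum_congr rfl
    intro j _
    unfold Estate
    congr 1
    have hs : S (Function.update y z0 ⟨(y z0 : ℕ) + 1, h⟩) = S y + 1 := by
      have := S_update y z0 ⟨(y z0 : ℕ) + 1, h⟩
      simp only [Fin.val_mk] at this
      omega
    have hs' : (∑ k, ((Function.update y z0 ⟨(y z0 : ℕ) + 1, h⟩ k : ℕ))) = S y + 1 := hs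
    rw [hs']
  · next h =>
    symm
    apply Finset.sum_eq_zero
    intro j _
    have hj := j.2
    have hz : (y z0 : ℕ) ≤ S y :=
      Finset.single_le_sum (f := fun k => ((y k : ℕ))) (fun k _ => Nat.zero_le _)
        (Finset.mem_univ z0)
    rw [if_neg (by omega), mul_zero]

lemma S_comp (x : Fin n → Fin d) (σ : Equiv.Perm (Fin n)) : S (x ∘ σ) = S x :=
  Equiv.sum_comp σ (fun k => ((x k : ℕ)))

end Aux14

theorem stmt_14 {n d : ℕ} (hn : 2 ≤ n) (ψ : (Fin n → Fin d) → ℂ) (hψ : PSym ψ) :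
    PSym (appAt ⟨0, by omega⟩ (Kblock d) ψ) ↔
      ∃ α : Fin d → ℂ, ψ = fun x => ∑ j : Fin d, α j * Estate n d (j : ℕ) x := by
  constructor
  · intro hK
    refine ⟨fun j => ψ (Function.update (fun _ => (⟨0, j.pos⟩ : Fin d)) ⟨0, by omega⟩ j), ?_⟩
    funext x
    rw [Aux14.sum_E]
    split
    · next h =>
      exact Aux14.eq_of_sum_eq ⟨0, by omega⟩ hψ hK _ x _ le_rfl
        (by rw [Aux14.S_canon])
    · next h =>
      exact Aux14.zero_of_big ⟨0, by omega⟩ hψ hK d x (by omega) (by omega)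
  · rintro ⟨α, hα⟩
    intro σ y
    rw [Aux14.K_formula ⟨0, by omega⟩ α hα (y ∘ σ), Aux14.K_formula ⟨0, by omega⟩ α hα y,
      Aux14.S_comp]
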